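/- For A ∈ B(H) with associated operator χ_A on H₊ ⊕ H₊: x₁ + x₂·n ∈ N(A) if and only if (x₁, −conj(x₂)) ∈ N(χ_A); x₁ + x₂·n ∈ R(A) if and only if (x₁, −conj(x₂)) ∈ R(χ_A); and the analogous equivalences hold for N(A)^⊥ and R(A)^⊥. -/

import Mathlib

noncomputable section

open MulOpposite

local notation "ℍ" => Quaternion ℝ

variable {H : Type*} [NormedAddCommGroup H] [Module ℍᵐᵒᵖ H]

/-- The axioms of a quaternion-valued inner product compatible with the norm on a
right quaternionic module `H` (scalars act on the right via `ℍᵐᵒᵖ`). -/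
structure QInner (inn : H → H → ℍ) : Prop where
  add_right : ∀ u v w : H, inn u (v + w) = inn u v + inn u w
  smul_right : ∀ (u v : H) (q : ℍ), inn u (op q • v) = inn u v * q
  conj_symm : ∀ u v : H, inn u v = star (inn v u)
  norm_sq : ∀ u : H, inn u u = ((‖u‖ ^ 2 : ℝ) : ℍ)

/-- `B` is the adjoint of the bounded right linear operator `A`. -/
def IsAdjB (inn : H → H → ℍ) (A B : H →L[ℍᵐᵒᵖ] H) : Prop :=
  ∀ x y : H, inn (B x) y = inn x (A y)

/-- `A` is a positive bounded operator. -/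
def IsPosB (inn : H → H → ℍ) (A : H →L[ℍᵐᵒᵖ] H) : Prop :=
  IsAdjB inn A A ∧ ∀ x : H, ∃ r : ℝ, 0 ≤ r ∧ inn x (A x) = (r : ℍ)

/-- Orthogonal complement of a set. -/
def qOrth (inn : H → H → ℍ) (S : Set H) : Set H := {x | ∀ y ∈ S, inn y x = 0}

/-- Null space of a bounded operator. -/
def kerB (A : H →L[ℍᵐᵒᵖ] H) : Set H := {x | A x = 0}

/-- `U` is a partial isometry: it is isometric on `N(U)^⊥`. -/
def IsPartialIsomB (inn : H → H → ℍ) (U : H →L[ℍᵐᵒᵖ] H) : Prop :=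
  ∀ x ∈ qOrth inn (kerB U), ‖U x‖ = ‖x‖

/-- Null space of an unbounded operator. -/
def pKer (T : H →ₗ.[ℍᵐᵒᵖ] H) : Set H := {x | ∃ hx : x ∈ T.domain, T ⟨x, hx⟩ = 0}

/-- Range of an unbounded operator. -/
def pRan (T : H →ₗ.[ℍᵐᵒᵖ] H) : Set H := Set.range fun x : T.domain => T x

/-- `S` is the adjoint of the densely defined operator `T` : the formal adjoint
identity holds and the domain of `S` is maximal. -/
def IsAdjP (inn : H → H → ℍ) (T S : H →ₗ.[ℍᵐᵒᵖ] H) : Prop :=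
  (∀ (x : S.domain) (y : T.domain), inn (x : H) (T y) = inn (S x) (y : H)) ∧
  ∀ x z : H, (∀ y : T.domain, inn x (T y) = inn z (y : H)) → x ∈ S.domain

/-- `T` is a positive (self-adjoint) unbounded operator. -/
def IsPosP (inn : H → H → ℍ) (T : H →ₗ.[ℍᵐᵒᵖ] H) : Prop :=
  IsAdjP inn T T ∧ ∀ x : T.domain, ∃ r : ℝ, 0 ≤ r ∧ inn (x : H) (T x) = (r : ℍ)

/-- `C = S ∘ T` as unbounded operators, with the usual maximal domain. -/
def IsCompP (S T C : H →ₗ.[ℍᵐᵒᵖ] H) : Prop :=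
  (∀ x : H, x ∈ C.domain ↔ ∃ hx : x ∈ T.domain, T ⟨x, hx⟩ ∈ S.domain) ∧
  ∀ (x : C.domain) (hx : (x : H) ∈ T.domain) (h2 : T ⟨x, hx⟩ ∈ S.domain),
    C x = S ⟨T ⟨x, hx⟩, h2⟩

/-- `T = U ∘ P` where `U` is bounded and `T`, `P` are unbounded. -/
def EqCompB (T : H →ₗ.[ℍᵐᵒᵖ] H) (U : H →L[ℍᵐᵒᵖ] H) (P : H →ₗ.[ℍᵐᵒᵖ] H) : Prop :=
  T.domain = P.domain ∧
  ∀ (x : H) (hx : x ∈ T.domain) (hx' : x ∈ P.domain), T ⟨x, hx⟩ = U (P ⟨x, hx'⟩)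

/-- The bounded operator `B` commutes with the unbounded operator `T`, i.e. `TB ⊆ BT`. -/
def CommP (B : H →L[ℍᵐᵒᵖ] H) (T : H →ₗ.[ℍᵐᵒᵖ] H) : Prop :=
  ∀ x : T.domain, ∃ h : B (x : H) ∈ T.domain, T ⟨B (x : H), h⟩ = B (T x)

/-- The slice Hilbert space `H₊^{Jm} = {x ∈ H : Jx = x·m}`. -/
def Hplus (J : H →L[ℍᵐᵒᵖ] H) (m : ℍ) : Set H := {x | J x = op m • x}

/-- Pairs with both components in the slice `H₊^{Jm}` (the space `H₊ ⊕ H₊`). -/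
def Hplus2 (J : H →L[ℍᵐᵒᵖ] H) (m : ℍ) : Set (H × H) :=
  {p | p.1 ∈ Hplus J m ∧ p.2 ∈ Hplus J m}

/-- The `ℂ_m`-valued inner product on `H₊ ⊕ H₊`. -/
def innP (inn : H → H → ℍ) (p q : H × H) : ℍ := inn p.1 q.1 + inn p.2 q.2

/-- The Hilbert space norm on `H₊ ⊕ H₊`. -/
def normP (p : H × H) : ℝ := Real.sqrt (‖p.1‖ ^ 2 + ‖p.2‖ ^ 2)

/-- `cj` is a conjugation of the slice `H₊^{Jm}` (e.g. the one induced by an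
orthonormal basis of `H₊^{Jm}`): an additive, `ℂ_m`-antilinear, isometric involution. -/
structure IsSliceConj (inn : H → H → ℍ) (J : H →L[ℍᵐᵒᵖ] H) (m : ℍ) (cj : H → H) : Prop where
  mem : ∀ x ∈ Hplus J m, cj x ∈ Hplus J m
  add : ∀ x y : H, cj (x + y) = cj x + cj y
  invol : ∀ x : H, cj (cj x) = x
  antilinear : ∀ x : H, cj (op m • x) = -(op m • cj x)
  inner : ∀ x ∈ Hplus J m, ∀ y ∈ Hplus J m, inn (cj x) (cj y) = inn y x

/-- `A = A₁ + A₂ · n` : the bounded right linear operator `A` decomposes along the slice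
`H₊^{Jm}` into the pair of bounded `ℂ_m`-linear operators `A₁, A₂` on `H₊^{Jm}`. -/
structure IsSliceDecomp (inn : H → H → ℍ) (J : H →L[ℍᵐᵒᵖ] H) (m n : ℍ) (cj : H → H)
    (A : H →L[ℍᵐᵒᵖ] H) (A₁ A₂ : H → H) : Prop where
  mem₁ : ∀ x ∈ Hplus J m, A₁ x ∈ Hplus J m
  mem₂ : ∀ x ∈ Hplus J m, A₂ x ∈ Hplus J m
  add₁ : ∀ x y : H, A₁ (x + y) = A₁ x + A₁ y
  add₂ : ∀ x y : H, A₂ (x + y) = A₂ x + A₂ y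
  lin₁ : ∀ x : H, A₁ (op m • x) = op m • A₁ x
  lin₂ : ∀ x : H, A₂ (op m • x) = op m • A₂ x
  decomp : ∀ x ∈ Hplus J m, A x = A₁ x + op n • A₂ (cj x)

/-- The operator matrix `χ_A = [[A₁, A₂], [-conj(A₂), conj(A₁)]]` acting on `H₊ ⊕ H₊`,
where `conj(B) = cj ∘ B ∘ cj`. -/
def chi (cj A₁ A₂ : H → H) (p : H × H) : H × H :=
  (A₁ p.1 + A₂ p.2, -(cj (A₂ (cj p.1))) + cj (A₁ (cj p.2)))

/-- The standing assumptions of the slice decomposition: `J` is anti self-adjoint and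
unitary, `m, n` are anticommuting imaginary units, and `H = H₊ ⊕ H₊·n`. -/
structure SliceSetup (inn : H → H → ℍ) (J : H →L[ℍᵐᵒᵖ] H) (m n : ℍ) : Prop where
  Jadj : IsAdjB inn J (-J)
  Junit : J.comp J = -1
  m_im : m.re = 0
  m_norm : ‖m‖ = 1
  n_im : n.re = 0
  n_norm : ‖n‖ = 1
  anticomm : m * n = -(n * m)
  split : ∀ x : H, ∃ x₁ ∈ Hplus J m, ∃ x₂ ∈ Hplus J m, x = x₁ + op n • x₂
  split_unique : ∀ x₁ ∈ Hplus J m, ∀ x₂ ∈ Hplus J m,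
    x₁ + op n • x₂ = 0 → x₁ = 0 ∧ x₂ = 0

/-!
Write `x = x₁ + x₂·n` with `x₁, x₂ ∈ H₊` and attach to it the twisted coordinates
`x̃ = (x₁, -conj x₂)`. The decomposition `A = A₁ + A₂·n` gives
`A x = (A₁x₁ - A₂ conj x₂) + (A₂ conj x₁ + A₁x₂)·n`, and `χ_A x̃` is exactly the twisted
coordinate pair of this vector; uniqueness of the slice decomposition then carries kernel and
range across. For the complements, the inner product splits as
`⟨y, z⟩ = ⟨ỹ, z̃⟩ + conj ⟨(y·n)~, z̃⟩ · n` with both coefficients in `ℂ_m`, and such a sum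
vanishes only when both coefficients do. As `N(A)` and `R(A)` are stable under right
multiplication by `n`, orthogonality to them is orthogonality of twisted coordinates in
`H₊ ⊕ H₊`.
-/

theorem Quaternion.mul_self_eq_neg_one {n : ℍ} (hre : n.re = 0) (hn : ‖n‖ = 1) : n * n = -1 := by
  rw [← sq, sq_eq_neg_normSq.mpr hre, normSq_eq_norm_mul_self, hn]
  norm_num

theorem Quaternion.exists_eq_add_mul_of_commute {m q : ℍ} (hre : m.re = 0) (hm : ‖m‖ = 1)
    (hq : Commute q m) : ∃ a b : ℝ, q = a + b * m := by
  have hunit : m.imI ^ 2 + m.imJ ^ 2 + m.imK ^ 2 = 1 := by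
    have h := normSq_eq_norm_mul_self m
    rw [hm, normSq_def', hre] at h
    linarith
  refine ⟨q.re, q.imI * m.imI + q.imJ * m.imJ + q.imK * m.imK, ?_⟩
  have eI := congrArg QuaternionAlgebra.imI hq.eq
  have eJ := congrArg QuaternionAlgebra.imJ hq.eq
  have eK := congrArg QuaternionAlgebra.imK hq.eq
  simp only [imI_mul, imJ_mul, imK_mul, hre] at eI eJ eK
  ext <;> simp only [re_add, imI_add, imJ_add, imK_add, re_coe, imI_coe, imJ_coe, imK_coe,
    coe_mul_eq_smul, re_smul, imI_smul, imJ_smul, imK_smul, hre, smul_eq_mul]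
  · ring
  · linear_combination (-q.imI) * hunit + m.imJ / 2 * eK - m.imK / 2 * eJ
  · linear_combination (-q.imJ) * hunit - m.imI / 2 * eK + m.imK / 2 * eI
  · linear_combination (-q.imK) * hunit + m.imI / 2 * eJ - m.imJ / 2 * eI

theorem Quaternion.mul_eq_star_mul_of_commute {m n q : ℍ} (hre : m.re = 0) (hm : ‖m‖ = 1)
    (hmn : m * n = -(n * m)) (hq : Commute q m) : n * q = star q * n := by
  obtain ⟨a, b, rfl⟩ := exists_eq_add_mul_of_commute hre hm hq
  rw [coe_mul_eq_smul, star_add, star_smul, star_coe, star_eq_neg.mpr hre,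
    mul_add, add_mul, mul_smul_comm, smul_mul_assoc, neg_mul, hmn, neg_neg, coe_commutes]

theorem Quaternion.eq_zero_of_add_mul_eq_zero {m n p q : ℍ} (hm : m ≠ 0) (hn : n ≠ 0)
    (hmn : m * n = -(n * m)) (hp : Commute p m) (hq : Commute q m) (h : p + q * n = 0) :
    p = 0 ∧ q = 0 := by
  have hpq : p = -(q * n) := eq_neg_of_add_eq_zero_left h
  -- `p` commutes with `m`, while `p = -q·n` anticommutes with it
  have hmp : m * p = -(m * p) :=
    calc m * p = p * m := hp.eq.symm
      _ = -(q * (n * m)) := by rw [hpq, neg_mul, mul_assoc]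
      _ = q * m * n := by rw [← neg_eq_iff_eq_neg.mpr hmn, mul_neg, neg_neg, mul_assoc]
      _ = -(m * p) := by rw [hq.eq, hpq, mul_neg, neg_neg, mul_assoc]
  have h2mp : (2 : ℝ) • (m * p) = 0 := by
    rw [two_smul]
    nth_rewrite 2 [hmp]
    exact add_neg_cancel _
  have hp0 : p = 0 :=
    (mul_eq_zero.mp ((smul_eq_zero.mp h2mp).resolve_left two_ne_zero)).resolve_left hm
  rw [hp0, zero_add] at h
  exact ⟨hp0, (mul_eq_zero.mp h).resolve_right hn⟩

theorem Quaternion.commute_star_of_commute {a m : ℍ} (hre : m.re = 0) (h : Commute a m) :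
    Commute (star a) m := by
  simpa [star_eq_neg.mpr hre] using h.star_star

namespace QInner

variable {inn : H → H → ℍ}

theorem add_left (hinn : QInner inn) (u v w : H) : inn (u + v) w = inn u w + inn v w := by
  rw [hinn.conj_symm, hinn.add_right, star_add, ← hinn.conj_symm, ← hinn.conj_symm]

theorem smul_left (hinn : QInner inn) (u v : H) (q : ℍ) :
    inn (op q • u) v = star q * inn u v := by
  rw [hinn.conj_symm, hinn.smul_right, star_mul, ← hinn.conj_symm]

theorem neg_left (hinn : QInner inn) (u v : H) : inn (-u) v = -inn u v := by
  simpa using hinn.smul_left u v (-1)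

theorem neg_right (hinn : QInner inn) (u v : H) : inn u (-v) = -inn u v := by
  rw [hinn.conj_symm, hinn.neg_left, star_neg, ← hinn.conj_symm]

end QInner

section Slice

variable {inn : H → H → ℍ} {J : H →L[ℍᵐᵒᵖ] H} {m n : ℍ} {cj : H → H}

theorem mem_Hplus_iff {x : H} : x ∈ Hplus J m ↔ J x = op m • x := Iff.rfl

theorem zero_mem_Hplus (J : H →L[ℍᵐᵒᵖ] H) (m : ℍ) : (0 : H) ∈ Hplus J m := by
  rw [mem_Hplus_iff, map_zero, smul_zero]

theorem add_mem_Hplus {x y : H} (hx : x ∈ Hplus J m) (hy : y ∈ Hplus J m) :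
    x + y ∈ Hplus J m := by
  rw [mem_Hplus_iff] at hx hy ⊢
  rw [map_add, hx, hy, smul_add]

theorem neg_mem_Hplus {x : H} (hx : x ∈ Hplus J m) : -x ∈ Hplus J m := by
  rw [mem_Hplus_iff] at hx ⊢
  rw [map_neg, hx, smul_neg]

theorem sub_mem_Hplus {x y : H} (hx : x ∈ Hplus J m) (hy : y ∈ Hplus J m) :
    x - y ∈ Hplus J m :=
  sub_eq_add_neg x y ▸ add_mem_Hplus hx (neg_mem_Hplus hy)

namespace IsSliceConj

theorem map_neg (hcj : IsSliceConj inn J m cj) (x : H) : cj (-x) = -cj x :=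
  (AddMonoidHom.mk' cj hcj.add).map_neg x

theorem map_zero (hcj : IsSliceConj inn J m cj) : cj 0 = 0 :=
  (AddMonoidHom.mk' cj hcj.add).map_zero

theorem injective (hcj : IsSliceConj inn J m cj) : Function.Injective cj :=
  Function.LeftInverse.injective hcj.invol

theorem neg_mem {x : H} (hcj : IsSliceConj inn J m cj) (hx : x ∈ Hplus J m) :
    -cj x ∈ Hplus J m :=
  neg_mem_Hplus (hcj.mem x hx)

theorem neg_neg_apply (hcj : IsSliceConj inn J m cj) (x : H) : -cj (-cj x) = x := by
  rw [hcj.map_neg, neg_neg, hcj.invol]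

theorem innP_neg_cj (hinn : QInner inn) (hcj : IsSliceConj inn J m cj) {y₁ y₂ z₁ z₂ : H}
    (hy₂ : y₂ ∈ Hplus J m) (hz₂ : z₂ ∈ Hplus J m) :
    innP inn (y₁, -cj y₂) (z₁, -cj z₂) = inn y₁ z₁ + star (inn y₂ z₂) := by
  rw [innP, hinn.neg_left, hinn.neg_right, neg_neg, hcj.inner y₂ hy₂ z₂ hz₂, ← hinn.conj_symm]

theorem forall_mem_Hplus2_iff (hcj : IsSliceConj inn J m cj) {P : H × H → Prop} :
    (∀ q ∈ Hplus2 J m, P q) ↔ ∀ y₁ ∈ Hplus J m, ∀ y₂ ∈ Hplus J m, P (y₁, -cj y₂) := by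
  refine ⟨fun h y₁ hy₁ y₂ hy₂ => h _ ⟨hy₁, hcj.neg_mem hy₂⟩, fun h q hq => ?_⟩
  simpa only [hcj.neg_neg_apply] using h q.1 hq.1 _ (hcj.neg_mem hq.2)

theorem exists_mem_Hplus2_iff (hcj : IsSliceConj inn J m cj) {P : H × H → Prop} :
    (∃ q ∈ Hplus2 J m, P q) ↔ ∃ y₁ ∈ Hplus J m, ∃ y₂ ∈ Hplus J m, P (y₁, -cj y₂) := by
  refine ⟨fun ⟨q, hq, hP⟩ => ⟨q.1, hq.1, _, hcj.neg_mem hq.2, ?_⟩,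
    fun ⟨y₁, hy₁, y₂, hy₂, hP⟩ => ⟨_, ⟨hy₁, hcj.neg_mem hy₂⟩, hP⟩⟩
  rwa [hcj.neg_neg_apply]

end IsSliceConj

namespace SliceSetup

theorem n_mul_n (hs : SliceSetup inn J m n) : n * n = -1 :=
  Quaternion.mul_self_eq_neg_one hs.n_im hs.n_norm

theorem smul_smul_n (hs : SliceSetup inn J m n) (x : H) : op n • op n • x = -x := by
  rw [smul_smul, ← op_mul, hs.n_mul_n, op_neg, op_one, neg_one_smul]

theorem add_smul_inj (hs : SliceSetup inn J m n) {u v u' v' : H} (hu : u ∈ Hplus J m)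
    (hv : v ∈ Hplus J m) (hu' : u' ∈ Hplus J m) (hv' : v' ∈ Hplus J m) :
    u + op n • v = u' + op n • v' ↔ u = u' ∧ v = v' := by
  refine ⟨fun h => ?_, fun ⟨rfl, rfl⟩ => rfl⟩
  have h0 : (u - u') + op n • (v - v') = 0 := by
    rw [smul_sub, ← add_sub_add_comm, h, sub_self]
  obtain ⟨hu0, hv0⟩ := hs.split_unique _ (sub_mem_Hplus hu hu') _ (sub_mem_Hplus hv hv') h0
  exact ⟨sub_eq_zero.mp hu0, sub_eq_zero.mp hv0⟩

theorem commute_inner (hinn : QInner inn) (hs : SliceSetup inn J m n) {u v : H}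
    (hu : u ∈ Hplus J m) (hv : v ∈ Hplus J m) : Commute (inn u v) m := by
  have h := hs.Jadj u v
  rw [neg_apply, hinn.neg_left, mem_Hplus_iff.mp hu, mem_Hplus_iff.mp hv,
    hinn.smul_left, hinn.smul_right, Quaternion.star_eq_neg.mpr hs.m_im, neg_mul, neg_neg] at h
  exact h.symm

theorem inner_add_smul (hinn : QInner inn) (hs : SliceSetup inn J m n) {y₁ y₂ z₁ z₂ : H}
    (hy₂ : y₂ ∈ Hplus J m) (hz₁ : z₁ ∈ Hplus J m) (hz₂ : z₂ ∈ Hplus J m) :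
    inn (y₁ + op n • y₂) (z₁ + op n • z₂) =
      (inn y₁ z₁ + star (inn y₂ z₂)) + (inn y₁ z₂ - star (inn y₂ z₁)) * n := by
  have hn_conj : ∀ {u v : H}, u ∈ Hplus J m → v ∈ Hplus J m → n * inn u v = star (inn u v) * n :=
    fun hu hv => Quaternion.mul_eq_star_mul_of_commute hs.m_im hs.m_norm hs.anticomm
      (hs.commute_inner hinn hu hv)
  rw [hinn.add_right, hinn.add_left, hinn.add_left, hinn.smul_right, hinn.smul_left,
    hinn.smul_left, hinn.smul_right, Quaternion.star_eq_neg.mpr hs.n_im, neg_mul, neg_mul,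
    hn_conj hy₂ hz₁, ← mul_assoc, hn_conj hy₂ hz₂, mul_assoc, hs.n_mul_n, mul_neg_one]
  noncomm_ring

theorem inner_add_smul_eq_zero_iff (hinn : QInner inn) (hs : SliceSetup inn J m n)
    (hcj : IsSliceConj inn J m cj) {y₁ y₂ z₁ z₂ : H} (hy₁ : y₁ ∈ Hplus J m)
    (hy₂ : y₂ ∈ Hplus J m) (hz₁ : z₁ ∈ Hplus J m) (hz₂ : z₂ ∈ Hplus J m) :
    inn (y₁ + op n • y₂) (z₁ + op n • z₂) = 0 ↔
      innP inn (y₁, -cj y₂) (z₁, -cj z₂) = 0 ∧ innP inn (-y₂, -cj y₁) (z₁, -cj z₂) = 0 := by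
  have hswap : innP inn (-y₂, -cj y₁) (z₁, -cj z₂) = star (inn y₁ z₂ - star (inn y₂ z₁)) := by
    rw [hcj.innP_neg_cj hinn hy₁ hz₂, hinn.neg_left, star_sub, star_star, neg_add_eq_sub]
  have hcomm {u v : H} (hu : u ∈ Hplus J m) (hv : v ∈ Hplus J m) : Commute (inn u v) m :=
    hs.commute_inner hinn hu hv
  have hcomm_star {u v : H} (hu : u ∈ Hplus J m) (hv : v ∈ Hplus J m) :
      Commute (star (inn u v)) m :=
    Quaternion.commute_star_of_commute hs.m_im (hcomm hu hv)
  rw [hs.inner_add_smul hinn hy₂ hz₁ hz₂, hcj.innP_neg_cj hinn hy₂ hz₂, hswap, star_eq_zero]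
  refine ⟨Quaternion.eq_zero_of_add_mul_eq_zero ?_ ?_ hs.anticomm
    ((hcomm hy₁ hz₁).add_left (hcomm_star hy₂ hz₂))
    ((hcomm hy₁ hz₂).sub_left (hcomm_star hy₂ hz₁)),
    fun ⟨h₁, h₂⟩ => by rw [h₁, h₂, zero_mul, add_zero]⟩
  · exact norm_ne_zero_iff.mp (hs.m_norm ▸ one_ne_zero)
  · exact norm_ne_zero_iff.mp (hs.n_norm ▸ one_ne_zero)

theorem mem_qOrth_add_smul_iff (hinn : QInner inn) (hs : SliceSetup inn J m n)
    (hcj : IsSliceConj inn J m cj) {S : Set H} (hS : ∀ y ∈ S, op n • y ∈ S) {x₁ x₂ : H}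
    (hx₁ : x₁ ∈ Hplus J m) (hx₂ : x₂ ∈ Hplus J m) :
    x₁ + op n • x₂ ∈ qOrth inn S ↔
      ∀ y₁ ∈ Hplus J m, ∀ y₂ ∈ Hplus J m, y₁ + op n • y₂ ∈ S →
        innP inn (y₁, -cj y₂) (x₁, -cj x₂) = 0 := by
  refine ⟨fun hx y₁ hy₁ y₂ hy₂ hy =>
    ((hs.inner_add_smul_eq_zero_iff hinn hcj hy₁ hy₂ hx₁ hx₂).mp (hx _ hy)).1, fun h y hy => ?_⟩
  obtain ⟨y₁, hy₁, y₂, hy₂, rfl⟩ := hs.split y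
  have hyn : -y₂ + op n • y₁ ∈ S := by
    simpa only [smul_add, hs.smul_smul_n, add_comm] using hS _ hy
  exact (hs.inner_add_smul_eq_zero_iff hinn hcj hy₁ hy₂ hx₁ hx₂).mpr
    ⟨h y₁ hy₁ y₂ hy₂ hy, h (-y₂) (neg_mem_Hplus hy₂) y₁ hy₁ hyn⟩

end SliceSetup

namespace IsSliceDecomp

variable {A : H →L[ℍᵐᵒᵖ] H} {A₁ A₂ : H → H}

theorem map_neg₁ (hdec : IsSliceDecomp inn J m n cj A A₁ A₂) (x : H) : A₁ (-x) = -A₁ x :=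
  (AddMonoidHom.mk' A₁ hdec.add₁).map_neg x

theorem map_neg₂ (hdec : IsSliceDecomp inn J m n cj A A₁ A₂) (x : H) : A₂ (-x) = -A₂ x :=
  (AddMonoidHom.mk' A₂ hdec.add₂).map_neg x

theorem apply_add_smul (hs : SliceSetup inn J m n) (hdec : IsSliceDecomp inn J m n cj A A₁ A₂)
    {y₁ y₂ : H} (hy₁ : y₁ ∈ Hplus J m) (hy₂ : y₂ ∈ Hplus J m) :
    A (y₁ + op n • y₂) = (A₁ y₁ - A₂ (cj y₂)) + op n • (A₂ (cj y₁) + A₁ y₂) := by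
  rw [map_add, map_smul, hdec.decomp y₁ hy₁, hdec.decomp y₂ hy₂, smul_add, hs.smul_smul_n,
    smul_add]
  abel

theorem chi_neg_cj (hcj : IsSliceConj inn J m cj) (hdec : IsSliceDecomp inn J m n cj A A₁ A₂)
    (y₁ y₂ : H) :
    chi cj A₁ A₂ (y₁, -cj y₂) = (A₁ y₁ - A₂ (cj y₂), -cj (A₂ (cj y₁) + A₁ y₂)) := by
  rw [chi, hcj.map_neg, hcj.invol, hdec.map_neg₁, hdec.map_neg₂, hcj.map_neg, hcj.add,
    neg_add, sub_eq_add_neg]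

theorem chi_mem_Hplus2 (hcj : IsSliceConj inn J m cj) (hdec : IsSliceDecomp inn J m n cj A A₁ A₂)
    {p : H × H} (hp : p ∈ Hplus2 J m) : chi cj A₁ A₂ p ∈ Hplus2 J m :=
  ⟨add_mem_Hplus (hdec.mem₁ _ hp.1) (hdec.mem₂ _ hp.2),
    add_mem_Hplus (hcj.neg_mem (hdec.mem₂ _ (hcj.mem _ hp.1)))
      (hcj.mem _ (hdec.mem₁ _ (hcj.mem _ hp.2)))⟩

theorem apply_eq_iff_chi_eq (hs : SliceSetup inn J m n) (hcj : IsSliceConj inn J m cj)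
    (hdec : IsSliceDecomp inn J m n cj A A₁ A₂) {x₁ x₂ y₁ y₂ : H} (hx₁ : x₁ ∈ Hplus J m)
    (hx₂ : x₂ ∈ Hplus J m) (hy₁ : y₁ ∈ Hplus J m) (hy₂ : y₂ ∈ Hplus J m) :
    A (y₁ + op n • y₂) = x₁ + op n • x₂ ↔ chi cj A₁ A₂ (y₁, -cj y₂) = (x₁, -cj x₂) := by
  have hu : A₁ y₁ - A₂ (cj y₂) ∈ Hplus J m :=
    sub_mem_Hplus (hdec.mem₁ _ hy₁) (hdec.mem₂ _ (hcj.mem _ hy₂))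
  have hv : A₂ (cj y₁) + A₁ y₂ ∈ Hplus J m :=
    add_mem_Hplus (hdec.mem₂ _ (hcj.mem _ hy₁)) (hdec.mem₁ _ hy₂)
  rw [hdec.apply_add_smul hs hy₁ hy₂, hs.add_smul_inj hu hv hx₁ hx₂, hdec.chi_neg_cj hcj,
    Prod.mk.injEq, neg_inj, hcj.injective.eq_iff]

theorem apply_eq_zero_iff (hs : SliceSetup inn J m n) (hcj : IsSliceConj inn J m cj)
    (hdec : IsSliceDecomp inn J m n cj A A₁ A₂) {x₁ x₂ : H} (hx₁ : x₁ ∈ Hplus J m)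
    (hx₂ : x₂ ∈ Hplus J m) :
    A (x₁ + op n • x₂) = 0 ↔ chi cj A₁ A₂ (x₁, -cj x₂) = 0 := by
  have h0 := hdec.apply_eq_iff_chi_eq hs hcj (zero_mem_Hplus J m) (zero_mem_Hplus J m) hx₁ hx₂
  rwa [smul_zero, add_zero, hcj.map_zero, neg_zero, Prod.mk_zero_zero] at h0

theorem mem_range_iff (hs : SliceSetup inn J m n) (hcj : IsSliceConj inn J m cj)
    (hdec : IsSliceDecomp inn J m n cj A A₁ A₂) {x₁ x₂ : H} (hx₁ : x₁ ∈ Hplus J m)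
    (hx₂ : x₂ ∈ Hplus J m) :
    x₁ + op n • x₂ ∈ Set.range A ↔ ∃ p ∈ Hplus2 J m, chi cj A₁ A₂ p = (x₁, -cj x₂) := by
  rw [hcj.exists_mem_Hplus2_iff]
  constructor
  · rintro ⟨y, hy⟩
    obtain ⟨y₁, hy₁, y₂, hy₂, rfl⟩ := hs.split y
    exact ⟨y₁, hy₁, y₂, hy₂, (hdec.apply_eq_iff_chi_eq hs hcj hx₁ hx₂ hy₁ hy₂).mp hy⟩
  · rintro ⟨y₁, hy₁, y₂, hy₂, h⟩
    exact ⟨_, (hdec.apply_eq_iff_chi_eq hs hcj hx₁ hx₂ hy₁ hy₂).mpr h⟩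

theorem mem_qOrth_kerB_iff (hinn : QInner inn) (hs : SliceSetup inn J m n)
    (hcj : IsSliceConj inn J m cj) (hdec : IsSliceDecomp inn J m n cj A A₁ A₂) {x₁ x₂ : H}
    (hx₁ : x₁ ∈ Hplus J m) (hx₂ : x₂ ∈ Hplus J m) :
    x₁ + op n • x₂ ∈ qOrth inn (kerB A) ↔
      ∀ q ∈ Hplus2 J m, chi cj A₁ A₂ q = 0 → innP inn q (x₁, -cj x₂) = 0 := by
  have hker : ∀ y ∈ kerB A, op n • y ∈ kerB A := fun y (hy : A y = 0) => by
    change A (op n • y) = 0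
    rw [map_smul, hy, smul_zero]
  rw [hs.mem_qOrth_add_smul_iff hinn hcj hker hx₁ hx₂, hcj.forall_mem_Hplus2_iff]
  exact forall₂_congr fun y₁ hy₁ => forall₂_congr fun y₂ hy₂ =>
    imp_congr_left (hdec.apply_eq_zero_iff hs hcj hy₁ hy₂)

theorem mem_qOrth_range_iff (hinn : QInner inn) (hs : SliceSetup inn J m n)
    (hcj : IsSliceConj inn J m cj) (hdec : IsSliceDecomp inn J m n cj A A₁ A₂) {x₁ x₂ : H}
    (hx₁ : x₁ ∈ Hplus J m) (hx₂ : x₂ ∈ Hplus J m) :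
    x₁ + op n • x₂ ∈ qOrth inn (Set.range A) ↔
      ∀ q ∈ Hplus2 J m, innP inn (chi cj A₁ A₂ q) (x₁, -cj x₂) = 0 := by
  have hrange : ∀ y ∈ Set.range A, op n • y ∈ Set.range A := by
    rintro _ ⟨y, rfl⟩
    exact ⟨op n • y, map_smul A _ y⟩
  rw [hs.mem_qOrth_add_smul_iff hinn hcj hrange hx₁ hx₂]
  calc (∀ y₁ ∈ Hplus J m, ∀ y₂ ∈ Hplus J m, y₁ + op n • y₂ ∈ Set.range A →
          innP inn (y₁, -cj y₂) (x₁, -cj x₂) = 0)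
      ↔ ∀ r ∈ Hplus2 J m, (∃ p ∈ Hplus2 J m, chi cj A₁ A₂ p = r) →
          innP inn r (x₁, -cj x₂) = 0 := by
        rw [hcj.forall_mem_Hplus2_iff]
        exact forall₂_congr fun y₁ hy₁ => forall₂_congr fun y₂ hy₂ =>
          imp_congr_left (hdec.mem_range_iff hs hcj hy₁ hy₂)
    _ ↔ ∀ q ∈ Hplus2 J m, innP inn (chi cj A₁ A₂ q) (x₁, -cj x₂) = 0 :=
        ⟨fun h q hq => h _ (hdec.chi_mem_Hplus2 hcj hq) ⟨q, hq, rfl⟩,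
          fun h _ _ ⟨q, hq, hqr⟩ => hqr ▸ h q hq⟩

end IsSliceDecomp

end Slice

theorem chi_kernel_range_correspondence_general
    (inn : H → H → ℍ) (hinn : QInner inn)
    (J : H →L[ℍᵐᵒᵖ] H) (m n : ℍ) (hslice : SliceSetup inn J m n)
    (cj : H → H) (hcj : IsSliceConj inn J m cj)
    (A : H →L[ℍᵐᵒᵖ] H) (A₁ A₂ : H → H)
    (hdec : IsSliceDecomp inn J m n cj A A₁ A₂) :
    ∀ x₁ ∈ Hplus J m, ∀ x₂ ∈ Hplus J m,
      -- null space
      ((A (x₁ + op n • x₂) = 0) ↔ chi cj A₁ A₂ (x₁, -(cj x₂)) = 0) ∧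
      -- range
      ((x₁ + op n • x₂ ∈ Set.range A) ↔
        ∃ p ∈ Hplus2 J m, chi cj A₁ A₂ p = (x₁, -(cj x₂))) ∧
      -- orthogonal complement of the null space
      ((x₁ + op n • x₂ ∈ qOrth inn (kerB A)) ↔
        ∀ q ∈ Hplus2 J m, chi cj A₁ A₂ q = 0 →
          innP inn q (x₁, -(cj x₂)) = 0) ∧
      -- orthogonal complement of the range
      ((x₁ + op n • x₂ ∈ qOrth inn (Set.range A)) ↔
        ∀ q ∈ Hplus2 J m, innP inn (chi cj A₁ A₂ q) (x₁, -(cj x₂)) = 0) :=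
  fun _ hx₁ _ hx₂ =>
    ⟨hdec.apply_eq_zero_iff hslice hcj hx₁ hx₂, hdec.mem_range_iff hslice hcj hx₁ hx₂,
      hdec.mem_qOrth_kerB_iff hinn hslice hcj hx₁ hx₂,
      hdec.mem_qOrth_range_iff hinn hslice hcj hx₁ hx₂⟩

/-- for `A ∈ B(H)` with associated operator `χ_A` on `H₊ ⊕ H₊`:
`x₁ + x₂·n ∈ N(A)` iff `(x₁, -conj x₂) ∈ N(χ_A)`; `x₁ + x₂·n ∈ R(A)` iff
`(x₁, -conj x₂) ∈ R(χ_A)`; and the analogous equivalences for `N(A)^⊥` and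
`R(A)^⊥`. -/
theorem chi_kernel_range_correspondence
    [CompleteSpace H] (inn : H → H → ℍ) (hinn : QInner inn)
    (J : H →L[ℍᵐᵒᵖ] H) (m n : ℍ) (hslice : SliceSetup inn J m n)
    (cj : H → H) (hcj : IsSliceConj inn J m cj)
    (A : H →L[ℍᵐᵒᵖ] H) (A₁ A₂ : H → H)
    (hdec : IsSliceDecomp inn J m n cj A A₁ A₂) :
    ∀ x₁ ∈ Hplus J m, ∀ x₂ ∈ Hplus J m,
      -- null space
      ((A (x₁ + op n • x₂) = 0) ↔ chi cj A₁ A₂ (x₁, -(cj x₂)) = 0) ∧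
      -- range
      ((x₁ + op n • x₂ ∈ Set.range A) ↔
        ∃ p ∈ Hplus2 J m, chi cj A₁ A₂ p = (x₁, -(cj x₂))) ∧
      -- orthogonal complement of the null space
      ((x₁ + op n • x₂ ∈ qOrth inn (kerB A)) ↔
        ∀ q ∈ Hplus2 J m, chi cj A₁ A₂ q = 0 →
          innP inn q (x₁, -(cj x₂)) = 0) ∧
      -- orthogonal complement of the range
      ((x₁ + op n • x₂ ∈ qOrth inn (Set.range A)) ↔
        ∀ q ∈ Hplus2 J m, innP inn (chi cj A₁ A₂ q) (x₁, -(cj x₂)) = 0) :=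
  chi_kernel_range_correspondence_general inn hinn J m n hslice cj hcj A A₁ A₂ hdec
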